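/- arXiv:2102.04584 — 3 statements merged into one kernel-verified Lean document; each statement's English description precedes it below -/
import Mathlib

section
/- Let k be a field, C an abelian k-linear category, and M an object of C such that End(M) = Hom(M, M) is finite-dimensional as a k-vector space. Then for an endomorphism f : M → M, the following are equivalent: (1) f is a monomorphism; (2) f is an epimorphism; (3) f is an isomorphism. -/
open CategoryTheory

/-- Let `k` be a field, `C` an abelian `k`-linear category, and `M` an object of `C`
such that `End(M) = Hom(M, M)` is finite-dimensional over `k`. Then for an
endomorphism `f : M ⟶ M`, the following are equivalent:
(1) `f` is a monomorphism; (2) `f` is an epimorphism; (3) `f` is an isomorphism. -/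
theorem mono_epi_isIso_tfae_of_finiteDimensional_end
    {k : Type*} [Field k] {C : Type*} [Category C] [Abelian C] [Linear k C]
    (M : C) [FiniteDimensional k (M ⟶ M)]
    (f : M ⟶ M) : List.TFAE [Mono f, Epi f, IsIso f] := by
  tfae_have 1 → 3
  · intro h
    have inj : Function.Injective (Linear.rightComp k M f) := by
      intro a b hab
      exact (cancel_mono f).mp hab
    obtain ⟨g, hg⟩ := (LinearMap.injective_iff_surjective.mp inj) (𝟙 M)
    simp only [Linear.rightComp_apply] at hg
    refine ⟨⟨g, ?_, hg⟩⟩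
    rw [← cancel_mono f, Category.assoc, hg, Category.comp_id, Category.id_comp]
  tfae_have 2 → 3
  · intro h
    have inj : Function.Injective (Linear.leftComp k M f) := by
      intro a b hab
      exact (cancel_epi f).mp hab
    obtain ⟨g, hg⟩ := (LinearMap.injective_iff_surjective.mp inj) (𝟙 M)
    simp only [Linear.leftComp_apply] at hg
    refine ⟨⟨g, hg, ?_⟩⟩
    rw [← cancel_epi f, ← Category.assoc, hg, Category.comp_id, Category.id_comp]
  tfae_have 3 → 1
  · intro h; infer_instance
  tfae_have 3 → 2
  · intro h; infer_instance
  tfae_finish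
end

section
/- Let k be a field, C an abelian k-linear category, and M, N objects of C such that End(M) = Hom(M, M) and End(N) = Hom(N, N) are finite-dimensional as k-vector spaces. If there are morphisms f : M → N and g : N → M which are both monomorphisms, then f and g are isomorphisms. -/
open CategoryTheory

lemma aux_isIso_of_mono_endo
    {k : Type*} [Field k] {C : Type*} [Category C] [Abelian C] [Linear k C]
    {M : C} [FiniteDimensional k (M ⟶ M)] (h : M ⟶ M) (hm : Mono h) : IsIso h := by
  have hinj : Function.Injective (Linear.rightComp k M h) := by
    intro a b hab
    exact (cancel_mono h).mp hab
  have hsurj := (LinearMap.injective_iff_surjective (f := Linear.rightComp k M h)).mp hinj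
  obtain ⟨a, ha⟩ := hsurj (𝟙 M)
  have : SplitEpi h := ⟨a, ha⟩
  have : Epi h := SplitEpi.epi this
  exact isIso_of_mono_of_epi h

/-- Let `k` be a field, `C` an abelian `k`-linear category, and `M`, `N` objects of `C`
whose endomorphism rings are finite-dimensional over `k`. If there are monomorphisms
`f : M ⟶ N` and `g : N ⟶ M`, then `f` and `g` are isomorphisms. -/
theorem isIso_of_mono_mono_of_finiteDimensional_end
    {k : Type*} [Field k] {C : Type*} [Category C] [Abelian C] [Linear k C]
    (M N : C) [FiniteDimensional k (M ⟶ M)] [FiniteDimensional k (N ⟶ N)]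
    (f : M ⟶ N) (g : N ⟶ M) (hf : Mono f) (hg : Mono g) :
    IsIso f ∧ IsIso g := by
  have hfg : IsIso (f ≫ g) := aux_isIso_of_mono_endo (k := k) (f ≫ g) (mono_comp f g)
  have hgf : IsIso (g ≫ f) := aux_isIso_of_mono_endo (k := k) (g ≫ f) (mono_comp g f)
  have hf' : IsIso f := by
    have : SplitEpi f := ⟨inv (g ≫ f) ≫ g, by simp⟩
    have : Epi f := SplitEpi.epi this
    exact isIso_of_mono_of_epi f
  have hg' : IsIso g := by
    have : SplitEpi g := ⟨inv (f ≫ g) ≫ f, by simp⟩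
    have : Epi g := SplitEpi.epi this
    exact isIso_of_mono_of_epi g
  exact ⟨hf', hg'⟩
end

section
/- Let k be a field, C an abelian k-linear category, and M, N objects of C such that End(M) = Hom(M, M) and End(N) = Hom(N, N) are finite-dimensional as k-vector spaces. If there are morphisms f : M → N and g : N → M which are both epimorphisms, then f and g are isomorphisms. -/
open CategoryTheory

lemma isIso_of_epi_of_fd {k : Type*} [Field k] {C : Type*} [Category C] [Abelian C]
    [Linear k C] {M : C} [FiniteDimensional k (M ⟶ M)] (h : M ⟶ M) (hh : Epi h) :
    IsIso h := by
  have hinj : Function.Injective (Linear.leftComp k M h) := by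
    intro u v huv
    simp only [Linear.leftComp_apply] at huv
    exact (cancel_epi h).mp huv
  have hsurj := (LinearMap.injective_iff_surjective).mp hinj
  obtain ⟨u, hu⟩ := hsurj (𝟙 M)
  simp only [Linear.leftComp_apply] at hu
  refine ⟨u, hu, ?_⟩
  have : h ≫ u ≫ h = h ≫ 𝟙 M := by rw [← Category.assoc, hu]; simp
  exact (cancel_epi h).mp this

/-- Let `k` be a field, `C` an abelian `k`-linear category, and `M`, `N` objects of `C`
whose endomorphism rings are finite-dimensional over `k`. If there are epimorphisms
`f : M ⟶ N` and `g : N ⟶ M`, then `f` and `g` are isomorphisms. -/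
theorem isIso_of_epi_epi_of_finiteDimensional_end
    {k : Type*} [Field k] {C : Type*} [Category C] [Abelian C] [Linear k C]
    (M N : C) [FiniteDimensional k (M ⟶ M)] [FiniteDimensional k (N ⟶ N)]
    (f : M ⟶ N) (g : N ⟶ M) (hf : Epi f) (hg : Epi g) :
    IsIso f ∧ IsIso g := by
  have h1 : IsIso (f ≫ g) := isIso_of_epi_of_fd (k := k) (f ≫ g) (epi_comp f g)
  have h2 : IsIso (g ≫ f) := isIso_of_epi_of_fd (k := k) (g ≫ f) (epi_comp g f)
  have hfm : Mono f := by
    have : Mono (f ≫ g) := inferInstance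
    exact mono_of_mono f g
  have hgm : Mono g := by
    have : Mono (g ≫ f) := inferInstance
    exact mono_of_mono g f
  exact ⟨isIso_of_mono_of_epi f, isIso_of_mono_of_epi g⟩
end
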